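/- Identity II: Under the elementary-system hypotheses, with α additionally nowhere zero on D, at every point of D one has ∂k/∂V − (k/α)·(∂α/∂V) = (∂α/∂S) − (α/k + C_v/(T·V·α))·(∂k/∂S); equivalently, k·(∂/∂V)(ln(k/α)) = (∂α/∂S) − (α/k + C_v/(T·V·α))·(∂k/∂S). -/

import Mathlib

/-- Partial derivative `∂f/∂x¹` (first coordinate) of a function on `ℝ²`. -/
noncomputable def pS (f : ℝ × ℝ → ℝ) (x : ℝ × ℝ) : ℝ := fderiv ℝ f x (1, 0)

/-- Partial derivative `∂f/∂x²` (second coordinate) of a function on `ℝ²`. -/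
noncomputable def pV (f : ℝ × ℝ → ℝ) (x : ℝ × ℝ) : ℝ := fderiv ℝ f x (0, 1)

/-- Hessian metric entry `η₁₁ = ∂²E/∂x¹∂x¹`. -/
noncomputable def e11 (E : ℝ × ℝ → ℝ) : ℝ × ℝ → ℝ := pS (pS E)

/-- Hessian metric entry `η₁₂ = ∂²E/∂x¹∂x²`. -/
noncomputable def e12 (E : ℝ × ℝ → ℝ) : ℝ × ℝ → ℝ := pV (pS E)

/-- Hessian metric entry `η₂₂ = ∂²E/∂x²∂x²`. -/
noncomputable def e22 (E : ℝ × ℝ → ℝ) : ℝ × ℝ → ℝ := pV (pV E)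

/-- Determinant `det η = η₁₁η₂₂ − η₁₂²` of the Hessian metric of `E`. -/
noncomputable def detHess (E : ℝ × ℝ → ℝ) (x : ℝ × ℝ) : ℝ :=
  e11 E x * e22 E x - (e12 E x) ^ 2

/-- Determinant of the 3×3 matrix `M` with rows `(η₁₁, ∂₁η₁₁, ∂₂η₁₁)`,
`(η₁₂, ∂₁η₁₂, ∂₂η₁₂)`, `(η₂₂, ∂₁η₂₂, ∂₂η₂₂)`. -/
noncomputable def detM (E : ℝ × ℝ → ℝ) (x : ℝ × ℝ) : ℝ :=
  Matrix.det !![e11 E x, pS (e11 E) x, pV (e11 E) x;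
                e12 E x, pS (e12 E) x, pV (e12 E) x;
                e22 E x, pS (e22 E) x, pV (e22 E) x]

/-- Scalar curvature `R = −(1/(4(det η)²))·det M` of the Hessian metric of `E`. -/
noncomputable def scalarCurv (E : ℝ × ℝ → ℝ) (x : ℝ × ℝ) : ℝ :=
  -(1 / (4 * (detHess E x) ^ 2)) * detM E x

/-!
The Weinhold metric is the Hessian of `U`, so its entries obey the integrability conditions
`∂_V η₁₁ = ∂_S η₁₂` and `∂_V η₁₂ = ∂_S η₂₂` (symmetry of third derivatives of `U`). Substituting the
prescribed entries, and `∂_S T = η₁₁`, `∂_V T = η₁₂` for `T = ∂_S U`, turns these two conditions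
into linear relations between the first partial derivatives of `C_v`, `α`, `k`; eliminating `∂_V C_v`
between them leaves Identity II.
-/

open Filter Topology

theorem fderiv_fderiv_apply_comm {E : Type*} [NormedAddCommGroup E] [NormedSpace ℝ E]
    {f : E → ℝ} {x : E} (hf : ContDiffAt ℝ 2 f x) (v w : E) :
    fderiv ℝ (fun y => fderiv ℝ f y v) x w = fderiv ℝ (fun y => fderiv ℝ f y w) x v := by
  have hf' : DifferentiableAt ℝ (fderiv ℝ f) x :=
    (hf.fderiv_right (m := 1) le_rfl).differentiableAt one_ne_zero
  rw [fderiv_clm_apply hf' (differentiableAt_const v),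
    fderiv_clm_apply hf' (differentiableAt_const w)]
  simpa using hf.isSymmSndFDerivAt (by simp) w v

section Partials

variable {f g : ℝ × ℝ → ℝ} {x : ℝ × ℝ} {d : ℝ}

theorem hasDerivAt_pS (hf : DifferentiableAt ℝ f x) :
    HasDerivAt (fun s => f (s, x.2)) (pS f x) x.1 := by
  have := hf.hasFDerivAt.comp_hasDerivAt x.1
    ((hasDerivAt_id x.1).prodMk (hasDerivAt_const x.1 x.2))
  simpa [pS, Function.comp_def] using this

theorem hasDerivAt_pV (hf : DifferentiableAt ℝ f x) :
    HasDerivAt (fun t => f (x.1, t)) (pV f x) x.2 := by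
  have := hf.hasFDerivAt.comp_hasDerivAt x.2
    ((hasDerivAt_const x.2 x.1).prodMk (hasDerivAt_id x.2))
  simpa [pV, Function.comp_def] using this

theorem pS_eq_of_hasDerivAt (hf : DifferentiableAt ℝ f x)
    (h : HasDerivAt (fun s => f (s, x.2)) d x.1) : pS f x = d :=
  (hasDerivAt_pS hf).unique h

theorem pV_eq_of_hasDerivAt (hf : DifferentiableAt ℝ f x)
    (h : HasDerivAt (fun t => f (x.1, t)) d x.2) : pV f x = d :=
  (hasDerivAt_pV hf).unique h

theorem Filter.EventuallyEq.pS_eq (h : f =ᶠ[𝓝 x] g) : pS f x = pS g x := by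
  rw [pS, h.fderiv_eq, pS]

theorem Filter.EventuallyEq.pV_eq (h : f =ᶠ[𝓝 x] g) : pV f x = pV g x := by
  rw [pV, h.fderiv_eq, pV]

theorem pV_pS_comm (hf : ContDiffAt ℝ 2 f x) : pV (pS f) x = pS (pV f) x :=
  fderiv_fderiv_apply_comm hf _ _

theorem ContDiffAt.pS {n : WithTop ℕ∞} (hf : ContDiffAt ℝ (n + 1) f x) :
    ContDiffAt ℝ n (pS f) x :=
  hf.fderiv_right_succ.clm_apply contDiffAt_const

theorem ContDiffAt.pV {n : WithTop ℕ∞} (hf : ContDiffAt ℝ (n + 1) f x) :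
    ContDiffAt ℝ n (pV f) x :=
  hf.fderiv_right_succ.clm_apply contDiffAt_const

end Partials

theorem pV_e11_eq_pS_e12 {U : ℝ × ℝ → ℝ} {x : ℝ × ℝ} (hU : ContDiffAt ℝ 3 U x) :
    pV (e11 U) x = pS (e12 U) x :=
  pV_pS_comm (hU.pS (n := 2))

theorem pV_e12_eq_pS_e22 {U : ℝ × ℝ → ℝ} {x : ℝ × ℝ} (hU : ContDiffAt ℝ 3 U x) :
    pV (e12 U) x = pS (e22 U) x := by
  have hsymm : e12 U =ᶠ[𝓝 x] pS (pV U) :=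
    (hU.eventually (by simp)).mono fun y hy => pV_pS_comm (hy.of_le (by norm_num))
  rw [hsymm.pV_eq, e22]
  exact pV_pS_comm (hU.pV (n := 2))

section Computation

variable {T Cv α k : ℝ × ℝ → ℝ} {x : ℝ × ℝ}

theorem mul_pV_log_div (hk : DifferentiableAt ℝ k x) (hα : DifferentiableAt ℝ α x)
    (hk0 : k x ≠ 0) (hα0 : α x ≠ 0) :
    k x * pV (fun y => Real.log (k y / α y)) x = pV k x - k x / α x * pV α x := by
  have hquot : k x / α x ≠ 0 := div_ne_zero hk0 hα0
  rw [pV_eq_of_hasDerivAt (by fun_prop (disch := assumption))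
    (((hasDerivAt_pV hk).div (hasDerivAt_pV hα) hα0).log hquot)]
  simp only [Prod.mk.eta, Pi.div_apply]
  field_simp

theorem identity_II_of_integrability (hT : DifferentiableAt ℝ T x)
    (hCv : DifferentiableAt ℝ Cv x) (hα : DifferentiableAt ℝ α x) (hk : DifferentiableAt ℝ k x)
    (hT0 : T x ≠ 0) (hCv0 : Cv x ≠ 0) (hk0 : k x ≠ 0) (hα0 : α x ≠ 0) (hV0 : x.2 ≠ 0)
    (hTS : pS T x = T x / Cv x) (hTV : pV T x = -(T x * α x) / (k x * Cv x))
    (hcompat₁ : pV (fun y => T y / Cv y) x = pS (fun y => -(T y * α y) / (k y * Cv y)) x)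
    (hcompat₂ : pV (fun y => -(T y * α y) / (k y * Cv y)) x
      = pS (fun y => (Cv y + y.2 * T y * α y ^ 2 / k y) / (y.2 * k y * Cv y)) x) :
    pV k x - k x / α x * pV α x
      = pS α x - (α x / k x + Cv x / (T x * x.2 * α x)) * pS k x := by
  have hkCv : k x * Cv x ≠ 0 := mul_ne_zero hk0 hCv0
  have hVkCv : x.2 * k x * Cv x ≠ 0 := mul_ne_zero (mul_ne_zero hV0 hk0) hCv0
  have hVS : HasDerivAt (fun s : ℝ => (s, x.2).2) 0 x.1 := hasDerivAt_const x.1 x.2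
  have hA₁ : pV (fun y => T y / Cv y) x = _ :=
    pV_eq_of_hasDerivAt (by fun_prop (disch := assumption))
      ((hasDerivAt_pV hT).div (hasDerivAt_pV hCv) hCv0)
  have hA₂ : pS (fun y => -(T y * α y) / (k y * Cv y)) x = _ :=
    pS_eq_of_hasDerivAt (by fun_prop (disch := assumption))
      ((((hasDerivAt_pS hT).mul (hasDerivAt_pS hα)).neg).div
        ((hasDerivAt_pS hk).mul (hasDerivAt_pS hCv)) hkCv)
  have hB₁ : pV (fun y => -(T y * α y) / (k y * Cv y)) x = _ :=
    pV_eq_of_hasDerivAt (by fun_prop (disch := assumption))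
      ((((hasDerivAt_pV hT).mul (hasDerivAt_pV hα)).neg).div
        ((hasDerivAt_pV hk).mul (hasDerivAt_pV hCv)) hkCv)
  have hB₂ : pS (fun y => (Cv y + y.2 * T y * α y ^ 2 / k y) / (y.2 * k y * Cv y)) x = _ :=
    pS_eq_of_hasDerivAt (by fun_prop (disch := assumption))
      (((hasDerivAt_pS hCv).add (((hVS.mul (hasDerivAt_pS hT)).mul
        ((hasDerivAt_pS hα).pow 2)).div (hasDerivAt_pS hk) hk0)).div
        ((hVS.mul (hasDerivAt_pS hk)).mul (hasDerivAt_pS hCv)) hVkCv)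
  rw [hA₁, hA₂, hTS, hTV] at hcompat₁
  rw [hB₁, hB₂, hTS, hTV] at hcompat₂
  simp only [Prod.mk.eta, Pi.mul_apply, Pi.neg_apply, Pi.add_apply, Pi.div_apply, Pi.pow_apply]
    at hcompat₁ hcompat₂
  field_simp at hcompat₁ hcompat₂ ⊢
  refine mul_left_cancel₀ (mul_ne_zero hV0 hCv0) ?_
  linear_combination hcompat₂ + T x * α x * x.2 ^ 2 * hcompat₁

end Computation

/-- Identity II: for an elementary thermodynamical system (hypotheses as in Identity I), with
`α` nowhere zero, one has
`∂k/∂V − (k/α)·∂α/∂V = ∂α/∂S − (α/k + C_v/(T·V·α))·∂k/∂S` on `D`; equivalently,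
`k·∂/∂V(ln(k/α)) = ∂α/∂S − (α/k + C_v/(T·V·α))·∂k/∂S`. -/
theorem identity_II
    (D : Set (ℝ × ℝ)) (hD : IsOpen D) (hDV : ∀ x ∈ D, 0 < x.2)
    (U Cv α k : ℝ × ℝ → ℝ)
    (hU : ContDiffOn ℝ (⊤ : ℕ∞) U D)
    (hCv : ContDiffOn ℝ (⊤ : ℕ∞) Cv D)
    (hα : ContDiffOn ℝ (⊤ : ℕ∞) α D)
    (hk : ContDiffOn ℝ (⊤ : ℕ∞) k D)
    (hT0 : ∀ x ∈ D, pS U x ≠ 0)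
    (hCv0 : ∀ x ∈ D, Cv x ≠ 0)
    (hk0 : ∀ x ∈ D, k x ≠ 0)
    (h11 : ∀ x ∈ D, e11 U x = pS U x / Cv x)
    (h12 : ∀ x ∈ D, e12 U x = -(pS U x * α x) / (k x * Cv x))
    (h22 : ∀ x ∈ D,
      e22 U x = (Cv x + x.2 * pS U x * α x ^ 2 / k x) / (x.2 * k x * Cv x))
    (hα0 : ∀ x ∈ D, α x ≠ 0) :
    ∀ x ∈ D,
      (pV k x - (k x / α x) * pV α x
        = pS α x - (α x / k x + Cv x / (pS U x * x.2 * α x)) * pS k x) ∧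
      (k x * pV (fun y => Real.log (k y / α y)) x
        = pS α x - (α x / k x + Cv x / (pS U x * x.2 * α x)) * pS k x) := by
  intro x hx
  have hnhds : D ∈ 𝓝 x := hD.mem_nhds hx
  have hUx : ContDiffAt ℝ 3 U x := (hU.contDiffAt hnhds).of_le (WithTop.coe_le_coe.mpr le_top)
  have hTx : DifferentiableAt ℝ (pS U) x := (hUx.pS (n := 2)).differentiableAt (by norm_num)
  have hCv' : DifferentiableAt ℝ Cv x := (hCv.contDiffAt hnhds).differentiableAt (by simp)
  have hα' : DifferentiableAt ℝ α x := (hα.contDiffAt hnhds).differentiableAt (by simp)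
  have hk' : DifferentiableAt ℝ k x := (hk.contDiffAt hnhds).differentiableAt (by simp)
  have e11_eq : e11 U =ᶠ[𝓝 x] _ := eventuallyEq_of_mem hnhds fun y hy => h11 y hy
  have e12_eq : e12 U =ᶠ[𝓝 x] _ := eventuallyEq_of_mem hnhds fun y hy => h12 y hy
  have e22_eq : e22 U =ᶠ[𝓝 x] _ := eventuallyEq_of_mem hnhds fun y hy => h22 y hy
  have hcompat₁ := pV_e11_eq_pS_e12 hUx
  rw [e11_eq.pV_eq, e12_eq.pS_eq] at hcompat₁
  have hcompat₂ := pV_e12_eq_pS_e22 hUx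
  rw [e12_eq.pV_eq, e22_eq.pS_eq] at hcompat₂
  have hII := identity_II_of_integrability hTx hCv' hα' hk' (hT0 x hx) (hCv0 x hx) (hk0 x hx)
    (hα0 x hx) (hDV x hx).ne' (h11 x hx) (h12 x hx) hcompat₁ hcompat₂
  exact ⟨hII, by rw [mul_pV_log_div hk' hα' (hk0 x hx) (hα0 x hx), hII]⟩
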